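/- arXiv:2210.15611 — 2 statements merged into one kernel-verified Lean document; each statement's English description precedes it below -/
import Mathlib

section
/- The discrete positivity-preserving reconstruction f̂ᵢ = f̄ + β(fᵢ - f̄) with β = min(|f̄/(f̄ - f_min)|, 1) satisfies: f̂ᵢ ≥ 0 for all i whenever f̄ ≥ 0, and the weighted mean is preserved: Σ mᵢ f̂ᵢ = f̄ whenever Σ mᵢ fᵢ = f̄ and Σ mᵢ = 1. -/
theorem squeeze_limiter (N : ℕ) (hN : 0 < N) (f m : Fin N → ℝ)
    (hm : ∀ i, 0 ≤ m i) (hsum : ∑ i, m i = 1)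
    (fbar : ℝ) (hfbar : fbar = ∑ i, m i * f i) (hfbar0 : 0 ≤ fbar)
    (fmin : ℝ)
    (hfmin : fmin = Finset.univ.inf'
      (Finset.univ_nonempty_iff.mpr (Fin.pos_iff_nonempty.mp hN)) f)
    (hlt : fmin < fbar)
    (β : ℝ) (hβ : β = min |fbar / (fbar - fmin)| 1)
    (fhat : Fin N → ℝ) (hfhat : ∀ i, fhat i = fbar + β * (f i - fbar)) :
    (∀ i, 0 ≤ fhat i) ∧ (∑ i, m i * fhat i = fbar) := by
  have hden : 0 < fbar - fmin := by linarith
  have hq : |fbar / (fbar - fmin)| = fbar / (fbar - fmin) := by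
    rw [abs_of_nonneg (div_nonneg hfbar0 hden.le)]
  have hβ0 : 0 ≤ β := by
    rw [hβ, hq]
    exact le_min (div_nonneg hfbar0 hden.le) zero_le_one
  have hβq : β ≤ fbar / (fbar - fmin) := by rw [hβ, hq]; exact min_le_left _ _
  have hβ1 : β ≤ 1 := by rw [hβ]; exact min_le_right _ _
  constructor
  · intro i
    rw [hfhat]
    rcases le_or_gt fbar (f i) with h | h
    · nlinarith
    · have hfm : fmin ≤ f i := by
        rw [hfmin]; exact Finset.inf'_le _ (Finset.mem_univ i)
      have : β * (fbar - fmin) ≤ fbar := by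
        calc β * (fbar - fmin) ≤ (fbar / (fbar - fmin)) * (fbar - fmin) := by
              exact mul_le_mul_of_nonneg_right hβq hden.le
          _ = fbar := by field_simp
      nlinarith
  · simp only [hfhat]
    have : ∑ i, m i * (fbar + β * (f i - fbar))
        = ∑ i, (m i * fbar + β * (m i * f i) - β * (m i * fbar)) := by
      apply Finset.sum_congr rfl; intro i _; ring
    rw [this, Finset.sum_sub_distrib, Finset.sum_add_distrib, ← Finset.mul_sum,
      ← Finset.mul_sum, ← Finset.sum_mul, hsum, ← hfbar]
    ring
end

section
/- The Rankine–Hugoniot energy flux is also conserved: with all quantities as in the normal-shock setup, U_L(E_L + P_L) = U_R(E_R + P_R), where E = P/(γ-1) + ρU²/2 on each side. -/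
theorem rankine_hugoniot_energy (γ ρL PL M : ℝ)
    (hγ : 1 < γ) (hρL : 0 < ρL) (hPL : 0 < PL) (hM : 1 < M)
    (UL : ℝ) (hUL : UL = M * Real.sqrt (γ * PL / ρL))
    (ρR UR PR : ℝ)
    (hρR : ρR = ρL * ((γ + 1) * M ^ 2 / ((γ - 1) * M ^ 2 + 2)))
    (hUR : UR = UL * (((γ - 1) * M ^ 2 + 2) / ((γ + 1) * M ^ 2)))
    (hPR : PR = PL * ((2 * γ * M ^ 2 - (γ - 1)) / (γ + 1)))
    (EL ER : ℝ)
    (hEL : EL = PL / (γ - 1) + ρL * UL ^ 2 / 2)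
    (hER : ER = PR / (γ - 1) + ρR * UR ^ 2 / 2) :
    UL * (EL + PL) = UR * (ER + PR) := by
  have h2 : UL ^ 2 = M ^ 2 * (γ * PL / ρL) := by
    rw [hUL, mul_pow, Real.sq_sqrt (by positivity)]
  have h3 : UL ^ 3 = UL * (M ^ 2 * (γ * PL / ρL)) := by
    rw [show (3:ℕ) = 2 + 1 from rfl, pow_succ, h2]; ring
  have hγ1 : γ - 1 > 0 := by linarith
  have hγ2 : γ + 1 > 0 := by linarith
  have hM2 : (0:ℝ) < M ^ 2 := by positivity
  have hd : (γ - 1) * M ^ 2 + 2 > 0 := by nlinarith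
  subst hER hEL hUR hρR hPR
  field_simp
  ring_nf
  rw [h3]
  field_simp
  ring
end
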